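/- arXiv:1110.3513 — 2 statements merged into one kernel-verified Lean document; each statement's English description precedes it below -/
import Mathlib

section
/- Let G be a residually finite group and let A ≤ G be an abelian subgroup that equals its own centralizer, i.e., A = {g ∈ G : g commutes with all of A}. Then A is separable in G. -/
open Pointwise

/-- In a residually finite group, a subgroup which is its own centralizer
(in particular abelian) is separable. -/
theorem selfCentralizing_separable (G : Type*) [Group G]
    (hRF : ∀ g : G, g ≠ 1 → ∃ N : Subgroup G, N.Normal ∧ N.index ≠ 0 ∧ g ∉ N)
    (A : Subgroup G)
    (hab : A = Subgroup.centralizer (A : Set G)) :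
    ∀ g : G, g ∉ A → ∃ H : Subgroup G, H.index ≠ 0 ∧
      g ∉ (H : Set G) * (A : Set G) := by
  intro g hg
  rw [hab, Subgroup.mem_centralizer_iff] at hg
  push_neg at hg
  obtain ⟨a, ha, hcomm⟩ := hg
  have hc : g * a * g⁻¹ * a⁻¹ ≠ 1 := by
    intro h
    apply hcomm
    have h2 : g * a * g⁻¹ = a := by
      have := mul_eq_one_iff_eq_inv.mp h
      simpa using this
    calc a * g = (g * a * g⁻¹) * g := by rw [h2]
      _ = g * a := by group
  obtain ⟨N, hNnorm, hNidx, hcN⟩ := hRF _ hc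
  refine ⟨N, hNidx, ?_⟩
  rintro ⟨n, hn, b, hb, rfl⟩
  apply hcN
  -- A is abelian: b commutes with a
  have hba : b * a = a * b := by
    have hbA : b ∈ Subgroup.centralizer (A : Set G) := hab ▸ hb
    exact (hbA a ha).symm
  have : n * b * a * (n * b)⁻¹ * a⁻¹ = n * (a * n⁻¹ * a⁻¹) := by
    rw [mul_inv_rev]
    calc n * b * a * (b⁻¹ * n⁻¹) * a⁻¹
        = n * (b * a * b⁻¹) * n⁻¹ * a⁻¹ := by group
      _ = n * (a * b * b⁻¹) * n⁻¹ * a⁻¹ := by rw [hba]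
      _ = n * (a * n⁻¹ * a⁻¹) := by group
  rw [this]
  exact N.mul_mem hn (hNnorm.conj_mem _ (N.inv_mem hn) a)
end

section
/- Let F be a finitely generated free group, let H ≤ F be a finitely generated subgroup, and let A ⊆ F be a finite subset disjoint from H. Then there exists a finite index subgroup G ≤ F with H ⊆ G and G ∩ A = ∅. -/
/-!
Let `F` act on the cosets `F ⧸ H`. Collect the finitely many cosets `t H`, `t` a suffix of the
reduced word of a generator of `H` or of an element of `A`. On this finite set each free generator
acts as a partial injection, which extends to a permutation; the resulting finite permutation
representation of `F` moves the base coset along every such word exactly as `F` does. The stabilizer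
of the base coset is then a finite index subgroup containing the generators of `H` but no element
of `A`.
-/

theorem Set.InjOn.exists_perm_eq_of_mem {X : Type*} {f : X → X} {S : Set X} [Finite S]
    (hf : S.InjOn f) : ∃ π : Equiv.Perm S, ∀ s : S, f s ∈ S → (π s : X) = f s := by
  let D := {s : S // f s ∈ S}
  obtain ⟨π, hπ⟩ := Equiv.Perm.exists_extending_pair (Subtype.val : D → S)
    (fun s => ⟨f s, s.2⟩) Subtype.val_injective
    fun s t hst => Subtype.ext <| Subtype.ext <| hf s.1.2 t.1.2 (congrArg Subtype.val hst)
  exact ⟨π, fun s hs => congrArg Subtype.val (hπ ⟨s, hs⟩)⟩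

namespace FreeGroup

variable {α X : Type*} [MulAction (FreeGroup α) X]

theorem lift_apply_mk_of_forall_tails {S : Set X} {π : α → Equiv.Perm S}
    (hπ : ∀ a (s : S), of a • (s : X) ∈ S → (π a s : X) = of a • (s : X))
    (l : List (α × Bool)) (s : S) (hl : ∀ t ∈ l.tails, mk t • (s : X) ∈ S) :
    (lift π (mk l) s : X) = mk l • (s : X) := by
  induction l with
  | nil => simp [← one_eq_mk]
  | cons c l ih =>
    have ih' := ih fun t ht => hl t (by simp [ht])
    obtain ⟨a, _ | _⟩ := c
    · have hmk : mk ((a, false) :: l) = (of a)⁻¹ * mk l := by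
        simp [of, inv_mk, invRev, mul_mk]
      let u : S := ⟨mk ((a, false) :: l) • (s : X), hl _ (by simp)⟩
      have hu : π a u = lift π (mk l) s := Subtype.ext <| by
        rw [hπ a u (by simp [u, hmk, mul_smul, ← ih']), ih']
        simp [u, hmk, mul_smul]
      rw [hmk, _root_.map_mul, _root_.map_inv, lift_apply_of, Equiv.Perm.mul_apply, ← hu,
        Equiv.Perm.inv_def, Equiv.symm_apply_apply]
      exact congrArg (· • (s : X)) hmk
    · have hmk : mk ((a, true) :: l) = of a * mk l := by simp [of, mul_mk]
      have hnext : of a • (lift π (mk l) s : X) ∈ S := by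
        rw [ih', ← mul_smul, ← hmk]
        exact hl _ (by simp)
      rw [hmk, _root_.map_mul, lift_apply_of, Equiv.Perm.mul_apply, hπ a _ hnext, ih', mul_smul]


theorem exists_finite_perm_apply_eq_smul (x : X) {W : Set (FreeGroup α)} (hW : W.Finite) :
    ∃ (S : Set X) (_ : Finite S) (φ : FreeGroup α →* Equiv.Perm S) (y : S),
      (y : X) = x ∧ ∀ w ∈ W, (φ w y : X) = w • x := by
  classical
  let S : Set X := insert x (⋃ w ∈ W, ⋃ t ∈ w.toWord.tails, {mk t • x})
  have hS : S.Finite := (hW.biUnion fun w _ =>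
    (List.finite_toSet w.toWord.tails).biUnion fun _ _ => Set.finite_singleton _).insert x
  have := hS.to_subtype
  choose π hπ using fun a : α =>
    (MulAction.injective (β := X) (of a)).injOn.exists_perm_eq_of_mem (S := S)
  refine ⟨S, this, lift π, ⟨x, Set.mem_insert x _⟩, rfl, fun w hw => ?_⟩
  have h := lift_apply_mk_of_forall_tails hπ w.toWord ⟨x, Set.mem_insert x _⟩ fun t ht =>
    Set.mem_insert_of_mem _ (Set.mem_biUnion hw (Set.mem_biUnion ht rfl))
  rwa [mk_toWord] at h

theorem exists_index_ne_zero_mem_iff_mem_stabilizer (x : X) {W : Set (FreeGroup α)}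
    (hW : W.Finite) :
    ∃ G : Subgroup (FreeGroup α), G.index ≠ 0 ∧
      ∀ w ∈ W, w ∈ G ↔ w ∈ MulAction.stabilizer (FreeGroup α) x := by
  obtain ⟨S, _, φ, y, rfl, hφ⟩ := exists_finite_perm_apply_eq_smul x hW
  refine ⟨(MulAction.stabilizer _ y).comap φ, ?_, fun w hw => ?_⟩
  · rw [Subgroup.index_comap]
    exact Subgroup.index_ne_zero_of_finite
  · rw [Subgroup.mem_comap, MulAction.mem_stabilizer_iff, MulAction.mem_stabilizer_iff,
      ← hφ w hw, Subtype.val_inj]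
    rfl

end FreeGroup

theorem marshall_hall_separability_general (α : Type*)
    (H : Subgroup (FreeGroup α)) (hH : H.FG)
    (A : Set (FreeGroup α)) (hA : A.Finite) (hdisj : ∀ a ∈ A, a ∉ H) :
    ∃ G : Subgroup (FreeGroup α), G.index ≠ 0 ∧ H ≤ G ∧ ∀ a ∈ A, a ∉ G := by
  obtain ⟨T, rfl⟩ := hH
  obtain ⟨G, hG, hmem⟩ := FreeGroup.exists_index_ne_zero_mem_iff_mem_stabilizer
    ((1 : FreeGroup α) : FreeGroup α ⧸ Subgroup.closure (T : Set (FreeGroup α)))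
    (T.finite_toSet.union hA)
  simp only [MulAction.stabilizer_quotient] at hmem
  refine ⟨G, hG, ?_, fun a ha haG => hdisj a ha ((hmem a (.inr ha)).1 haG)⟩
  rw [Subgroup.closure_le]
  exact fun t ht => (hmem t (.inl ht)).2 (Subgroup.subset_closure ht)

/-- Marshall Hall's theorem: a finitely generated subgroup `H` of a finitely generated
free group can be separated from any finite set `A` disjoint from `H` by a finite index
subgroup containing `H`. -/
theorem marshall_hall_separability (α : Type*) [Finite α]
    (H : Subgroup (FreeGroup α)) (hH : H.FG)
    (A : Set (FreeGroup α)) (hA : A.Finite) (hdisj : ∀ a ∈ A, a ∉ H) :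
    ∃ G : Subgroup (FreeGroup α), G.index ≠ 0 ∧ H ≤ G ∧ ∀ a ∈ A, a ∉ G :=
  marshall_hall_separability_general α H hH A hA hdisj
end
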